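/- Parseval-type identity for the QRT: Σ_{l,k∈[0,2N)} |QR_f(l,k)|² = Σ_{i,j∈[0,N)} |f(i,j)|². Equivalently, Σ_{l,k∈[0,N)} (|QR_f(2l,2k+1)+QR_f(2l+1,2k+1)|² + |QR_f(2l,2k+1)−QR_f(2l+1,2k+1)|²) = 2·Σ_{i,j∈[0,N)} |f(i,j)|². -/

import Mathlib

/-- The symmetrized extension `f̃` on `[0,2N)²`:
`f̃(x',y') = (1/2)(−1)^(⌊x'/N⌋+⌊y'/N⌋) f(x' mod N, y' mod N)`. -/
noncomputable def ftilde (N : ℕ) (f : ZMod N × ZMod N → ℝ) (x y : ℕ) : ℝ :=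
  (1 / 2) * (-1 : ℝ) ^ (x / N + y / N) * f (x, y)

/-- The quantum Radon transform
`QR_f(l,k) = (1/√(2N))·Σ_{(x',y') ∈ [0,2N)², x'+k·y' ≡ l mod 2N} f̃(x',y')`. -/
noncomputable def QRT (N : ℕ) (f : ZMod N × ZMod N → ℝ) (l k : ℕ) : ℝ :=
  (1 / Real.sqrt (2 * N)) * ∑ x ∈ Finset.range (2 * N), ∑ y ∈ Finset.range (2 * N),
    if (x + k * y) % (2 * N) = l % (2 * N) then ftilde N f x y else 0

/-!
On `ZMod (2 * N)` the extension `f̃` is antiperiodic with antiperiod `N` in each variable.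
Expanding `∑ₗ QR_f(l, k)²` and summing over all slopes `k` gives
`(2N)⁻¹ ∑_{y, y'} ∑ₓ f̃(x, y) ∑ₖ f̃(x + k (y - y'), y')`. For `N = 2ⁿ` every nonzero `d` divides
`N` in `ZMod (2 * N)`, so for `y ≠ y'` shifting `k` by a `c` with `c (y - y') = N` flips the sign
of the inner sum, which therefore vanishes. Only the diagonal survives, leaving `∑ f̃² = ∑ f²`.
Even slopes contribute nothing, since shifting `y` by `N` flips `f̃` but fixes `x + 2ky`;
so the odd slopes carry the whole sum, and the parallelogram identity gives the second form.
-/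

open Finset Function

theorem Function.Antiperiodic.sum_eq_zero {α β : Type*} [AddGroup α] [Fintype α]
    [AddCommGroup β] [IsAddTorsionFree β] {F : α → β} {c : α} (hF : Antiperiodic F c) :
    ∑ x, F x = 0 := by
  refine self_eq_neg.mp ?_
  calc ∑ x, F x = ∑ x, F (x + c) := (Equiv.sum_comp (Equiv.addRight c) F).symm
    _ = -∑ x, F x := by rw [← sum_neg_distrib]; exact sum_congr rfl fun x _ => hF x

theorem Function.Antiperiodic.sum_add_mul_eq_zero {R β : Type*} [CommRing R] [Fintype R]
    [AddCommGroup β] [IsAddTorsionFree β] {F : R → β} {p d : R} (hF : Antiperiodic F p)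
    (hd : d ∣ p) (x : R) :
    ∑ k, F (x + k * d) = 0 := by
  obtain ⟨c, rfl⟩ := hd
  refine Antiperiodic.sum_eq_zero (c := c) fun k => ?_
  rw [← hF, add_mul, mul_comm c d, add_assoc]

theorem Finset.sum_range_two_mul {M : Type*} [AddCommMonoid M] (F : ℕ → M) (m : ℕ) :
    ∑ i ∈ range (2 * m), F i = ∑ i ∈ range m, (F (2 * i) + F (2 * i + 1)) := by
  induction m with
  | zero => simp
  | succ m ih => rw [mul_add_one, sum_range_succ, sum_range_succ, ih, sum_range_succ, add_assoc]

theorem ZMod.sum_univ_eq_sum_range {M : Type*} [AddCommMonoid M] (n : ℕ) [NeZero n]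
    (F : ZMod n → M) : ∑ x, F x = ∑ i ∈ range n, F i :=
  Finset.sum_nbij' (fun x => x.val) (fun i => (i : ZMod n))
    (fun x _ => mem_range.2 x.val_lt) (fun _ _ => mem_univ _)
    (fun x _ => ZMod.natCast_zmod_val x) (fun i hi => ZMod.val_natCast_of_lt (mem_range.1 hi))
    (fun x _ => by rw [ZMod.natCast_zmod_val])

theorem ZMod.sum_range_two_mul_natCast {M : Type*} [AddCommMonoid M] (N : ℕ) (φ : ZMod N → M) :
    ∑ i ∈ range (2 * N), φ i = 2 • ∑ i ∈ range N, φ i := by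
  simp [two_mul, sum_range_add, two_nsmul]

section Radon

variable {R : Type*} [CommRing R] [Fintype R] [DecidableEq R]

noncomputable def radon (g : R → R → ℝ) (l k : R) : ℝ :=
  ∑ x, ∑ y, if x + k * y = l then g x y else 0

theorem radon_eq_sum (g : R → R → ℝ) (l k : R) : radon g l k = ∑ y, g (l - k * y) y := by
  rw [radon, sum_comm]
  refine sum_congr rfl fun y _ => ?_
  simp_rw [← eq_sub_iff_add_eq, sum_ite_eq', mem_univ, if_true]

theorem radon_two_mul_eq_zero {g : R → R → ℝ} {p : R} (hg : ∀ x, Antiperiodic (g x) p)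
    (hp : 2 * p = 0) (l k : R) : radon g l (2 * k) = 0 := by
  rw [radon_eq_sum]
  refine Antiperiodic.sum_eq_zero (c := p) fun y => ?_
  have : 2 * k * (y + p) = 2 * k * y := by linear_combination k * hp
  simp only [this, hg _ _]

theorem sum_sq_radon {g : R → R → ℝ} {p : R} (hg : ∀ y, Antiperiodic (g · y) p)
    (hp : ∀ d ≠ 0, d ∣ p) :
    ∑ k, ∑ l, radon g l k ^ 2 = Fintype.card R * ∑ x, ∑ y, g x y ^ 2 := by
  have hline : ∀ y y' k, ∑ l, g (l - k * y) y * g (l - k * y') y' =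
      ∑ x, g x y * g (x + k * (y - y')) y' := fun y y' k =>
    Fintype.sum_equiv (Equiv.addRight (-(k * y))) _ _ fun l => by
      simp only [Equiv.coe_addRight]
      congr 2 <;> ring
  have horth : ∀ y y', ∑ k, ∑ x, g x y * g (x + k * (y - y')) y' =
      if y = y' then Fintype.card R * ∑ x, g x y ^ 2 else 0 := by
    intro y y'
    rw [sum_comm]
    split_ifs with h
    · subst h
      simp [sq, mul_sum]
    · simp_rw [← mul_sum, (hg y').sum_add_mul_eq_zero (hp _ (sub_ne_zero.mpr h)), mul_zero,
        sum_const_zero]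
  calc ∑ k, ∑ l, radon g l k ^ 2
      = ∑ y, ∑ y', ∑ k, ∑ l, g (l - k * y) y * g (l - k * y') y' := by
        simp_rw [radon_eq_sum, sq, sum_mul_sum]
        rw [sum_congr rfl fun k _ => sum_comm.trans (sum_congr rfl fun y _ => sum_comm), sum_comm]
        exact sum_congr rfl fun y _ => sum_comm
    _ = ∑ y, ∑ y', if y = y' then Fintype.card R * ∑ x, g x y ^ 2 else 0 := by
        simp_rw [hline, horth]
    _ = Fintype.card R * ∑ x, ∑ y, g x y ^ 2 := by
        simp_rw [sum_ite_eq, mem_univ, if_true, ← mul_sum]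
        rw [sum_comm]

end Radon

theorem ZMod.dvd_natCast_of_eq_two_pow {n N : ℕ} (hN : N = 2 ^ n) {d : ZMod (2 * N)}
    (hd : d ≠ 0) : d ∣ (N : ZMod (2 * N)) := by
  subst hN
  obtain ⟨a, u, hu, hdu⟩ :=
    Nat.exists_eq_pow_mul_and_not_dvd ((ZMod.val_ne_zero d).mpr hd) 2 (by norm_num)
  obtain ⟨m, rfl⟩ : ∃ m, u = 2 * m + 1 := ⟨u / 2, by omega⟩
  -- with `d = 2^a u`, `u` odd, the witness is `2^(n-a)`: `2^(n-a) d = 2^n u ≡ 2^n`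
  have ha : a ≤ n := by
    have : 2 ^ a < 2 ^ (n + 1) :=
      calc 2 ^ a ≤ d.val := hdu ▸ Nat.le_mul_of_pos_right _ (by omega)
        _ < 2 ^ (n + 1) := d.val_lt.trans_eq (pow_succ' 2 n).symm
    exact Nat.lt_succ_iff.mp ((Nat.pow_lt_pow_iff_right (by norm_num)).mp this)
  have hprod : d.val * 2 ^ (n - a) = 2 ^ n + m * (2 * 2 ^ n) := by
    rw [hdu, mul_right_comm, ← pow_add, Nat.add_sub_cancel' ha]
    ring
  have hcast : ((d.val * 2 ^ (n - a) : ℕ) : ZMod (2 * 2 ^ n)) = ((2 ^ n : ℕ) : ZMod _) := by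
    rw [hprod, Nat.cast_add, Nat.cast_mul, ZMod.natCast_self, mul_zero, add_zero]
  rw [Nat.cast_mul, ZMod.natCast_zmod_val] at hcast
  exact ⟨_, hcast.symm⟩

section Extension

variable {N : ℕ} (f : ZMod N × ZMod N → ℝ)

theorem ftilde_sq (x y : ℕ) : ftilde N f x y ^ 2 = f (x, y) ^ 2 / 4 := by
  rw [ftilde, mul_pow, mul_pow, ← pow_mul, mul_comm _ 2, pow_mul, neg_one_sq, one_pow]
  ring

variable (N) in
noncomputable def ftildeZMod (x y : ZMod (2 * N)) : ℝ := ftilde N f x.val y.val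

theorem ftildeZMod_eq (x y : ZMod (2 * N)) : ftildeZMod N f x y =
    1 / 2 * ((-1) ^ (x.val / N) * (-1) ^ (y.val / N)) * f (x.val, y.val) := by
  rw [ftildeZMod, ftilde, pow_add]

variable [NeZero N]

theorem ZMod.antiperiodic_neg_one_pow_val_div :
    Antiperiodic (fun x : ZMod (2 * N) => (-1 : ℝ) ^ (x.val / N)) N := by
  intro x
  have hN := NeZero.pos N
  have hx := x.val_lt
  have hNval : (N : ZMod (2 * N)).val = N := ZMod.val_natCast_of_lt (by omega)
  show (-1 : ℝ) ^ ((x + N).val / N) = -(-1) ^ (x.val / N)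
  rw [ZMod.val_add, hNval]
  rcases lt_or_ge x.val N with h | h
  · rw [Nat.mod_eq_of_lt (by omega), Nat.div_eq_of_lt h,
      Nat.div_eq_of_lt_le (k := 1) (by omega) (by omega)]
    norm_num
  · rw [Nat.mod_eq_sub_mod (by omega), Nat.mod_eq_of_lt (by omega),
      Nat.div_eq_of_lt (by omega), Nat.div_eq_of_lt_le (k := 1) (by omega) (by omega)]
    norm_num

theorem ZMod.periodic_natCast_val :
    Periodic (fun x : ZMod (2 * N) => ((x.val : ℕ) : ZMod N)) N := by
  intro x
  simp only [ZMod.natCast_val, ZMod.cast_add (dvd_mul_left N 2),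
    ZMod.cast_natCast (dvd_mul_left N 2), ZMod.natCast_self, add_zero]

theorem ftildeZMod_antiperiodic_left (y : ZMod (2 * N)) :
    Antiperiodic (ftildeZMod N f · y) N := by
  intro x
  simp only [ftildeZMod_eq, ZMod.antiperiodic_neg_one_pow_val_div x, ZMod.periodic_natCast_val x]
  ring

theorem ftildeZMod_antiperiodic_right (x : ZMod (2 * N)) :
    Antiperiodic (ftildeZMod N f x) N := by
  intro y
  simp only [ftildeZMod_eq, ZMod.antiperiodic_neg_one_pow_val_div y, ZMod.periodic_natCast_val y]
  ring

theorem sum_sq_ftildeZMod :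
    ∑ x, ∑ y, ftildeZMod N f x y ^ 2 = ∑ i ∈ range N, ∑ j ∈ range N, f (i, j) ^ 2 := by
  calc ∑ x, ∑ y, ftildeZMod N f x y ^ 2
      = ∑ i ∈ range (2 * N), ∑ j ∈ range (2 * N), f (i, j) ^ 2 / 4 := by
        simp only [ZMod.sum_univ_eq_sum_range]
        refine sum_congr rfl fun i hi => sum_congr rfl fun j hj => ?_
        rw [ftildeZMod, ZMod.val_natCast_of_lt (mem_range.1 hi),
          ZMod.val_natCast_of_lt (mem_range.1 hj), ftilde_sq]
    _ = ∑ i ∈ range N, ∑ j ∈ range N, f (i, j) ^ 2 := by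
        rw [ZMod.sum_range_two_mul_natCast N fun a => ∑ j ∈ range (2 * N), f (a, j) ^ 2 / 4,
          nsmul_eq_mul, mul_sum]
        refine sum_congr rfl fun i _ => ?_
        rw [ZMod.sum_range_two_mul_natCast N fun b => f (i, b) ^ 2 / 4, nsmul_eq_mul, mul_sum,
          mul_sum]
        refine sum_congr rfl fun j _ => ?_
        ring

end Extension

section QRT

variable {N : ℕ} [NeZero N] (f : ZMod N × ZMod N → ℝ)

theorem QRT_eq_radon (l k : ℕ) :
    QRT N f l k = 1 / Real.sqrt (2 * N) * radon (ftildeZMod N f) l k := by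
  rw [QRT, radon]
  congr 1
  simp only [ZMod.sum_univ_eq_sum_range]
  refine sum_congr rfl fun x hx => sum_congr rfl fun y hy => if_congr ?_ ?_ rfl
  · rw [← ZMod.natCast_eq_natCast_iff']
    push_cast
    rfl
  · rw [ftildeZMod, ZMod.val_natCast_of_lt (mem_range.1 hx),
      ZMod.val_natCast_of_lt (mem_range.1 hy)]

theorem QRT_sq (l k : ℕ) : QRT N f l k ^ 2 = radon (ftildeZMod N f) l k ^ 2 / (2 * N) := by
  rw [QRT_eq_radon, mul_pow, div_pow, one_pow, Real.sq_sqrt (by positivity)]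
  ring

theorem QRT_two_mul (l k : ℕ) : QRT N f l (2 * k) = 0 := by
  have h2N : 2 * (N : ZMod (2 * N)) = 0 := by exact_mod_cast ZMod.natCast_self (2 * N)
  rw [QRT_eq_radon, Nat.cast_mul, Nat.cast_ofNat,
    radon_two_mul_eq_zero (ftildeZMod_antiperiodic_right f) h2N, mul_zero]

end QRT

theorem sum_sq_QRT {n N : ℕ} (hN : N = 2 ^ n) (f : ZMod N × ZMod N → ℝ) :
    ∑ l ∈ range (2 * N), ∑ k ∈ range (2 * N), QRT N f l k ^ 2 =
      ∑ i ∈ range N, ∑ j ∈ range N, f (i, j) ^ 2 := by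
  have : NeZero N := ⟨by rw [hN]; positivity⟩
  calc ∑ l ∈ range (2 * N), ∑ k ∈ range (2 * N), QRT N f l k ^ 2
      = (∑ k, ∑ l, radon (ftildeZMod N f) l k ^ 2) / (2 * N) := by
        rw [sum_comm]
        simp only [QRT_sq, ← sum_div, ZMod.sum_univ_eq_sum_range]
    _ = ∑ x, ∑ y, ftildeZMod N f x y ^ 2 := by
        rw [sum_sq_radon (ftildeZMod_antiperiodic_left f)
          fun _ hd => ZMod.dvd_natCast_of_eq_two_pow hN hd, ZMod.card, Nat.cast_mul, Nat.cast_ofNat,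
          mul_div_cancel_left₀ _ (by simp [NeZero.ne N])]
    _ = ∑ i ∈ range N, ∑ j ∈ range N, f (i, j) ^ 2 := sum_sq_ftildeZMod f

theorem sum_sq_QRT_odd {n N : ℕ} (hN : N = 2 ^ n) (f : ZMod N × ZMod N → ℝ) :
    ∑ k ∈ range N, ∑ l ∈ range (2 * N), QRT N f l (2 * k + 1) ^ 2 =
      ∑ i ∈ range N, ∑ j ∈ range N, f (i, j) ^ 2 := by
  have : NeZero N := ⟨by rw [hN]; positivity⟩
  rw [← sum_sq_QRT hN f, sum_comm (s := range (2 * N)) (t := range (2 * N)), sum_range_two_mul]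
  simp [QRT_two_mul]

/-- Parseval-type identity for the QRT (with `N = 2^n` a power of two):
`Σ_{l,k∈[0,2N)} |QR_f(l,k)|² = Σ_{i,j∈[0,N)} |f(i,j)|²`; equivalently
`Σ_{l,k∈[0,N)} (|QR_f(2l,2k+1)+QR_f(2l+1,2k+1)|² + |QR_f(2l,2k+1)−QR_f(2l+1,2k+1)|²)
 = 2·Σ_{i,j∈[0,N)} |f(i,j)|²`. -/
theorem qrt_parseval (n : ℕ) (N : ℕ) (hN : N = 2 ^ n) (f : ZMod N × ZMod N → ℝ) :
    (∑ l ∈ Finset.range (2 * N), ∑ k ∈ Finset.range (2 * N), (QRT N f l k) ^ 2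
      = ∑ i ∈ Finset.range N, ∑ j ∈ Finset.range N, (f (i, j)) ^ 2) ∧
    (∑ l ∈ Finset.range N, ∑ k ∈ Finset.range N,
        ((QRT N f (2 * l) (2 * k + 1) + QRT N f (2 * l + 1) (2 * k + 1)) ^ 2
          + (QRT N f (2 * l) (2 * k + 1) - QRT N f (2 * l + 1) (2 * k + 1)) ^ 2)
      = 2 * ∑ i ∈ Finset.range N, ∑ j ∈ Finset.range N, (f (i, j)) ^ 2) := by
  refine ⟨sum_sq_QRT hN f, ?_⟩
  calc ∑ l ∈ range N, ∑ k ∈ range N,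
        ((QRT N f (2 * l) (2 * k + 1) + QRT N f (2 * l + 1) (2 * k + 1)) ^ 2
          + (QRT N f (2 * l) (2 * k + 1) - QRT N f (2 * l + 1) (2 * k + 1)) ^ 2)
      = 2 * ∑ k ∈ range N, ∑ l ∈ range N,
          (QRT N f (2 * l) (2 * k + 1) ^ 2 + QRT N f (2 * l + 1) (2 * k + 1) ^ 2) := by
        rw [sum_comm, mul_sum]
        refine sum_congr rfl fun k _ => ?_
        rw [mul_sum]
        exact sum_congr rfl fun l _ => by ring
    _ = 2 * ∑ k ∈ range N, ∑ l ∈ range (2 * N), QRT N f l (2 * k + 1) ^ 2 := by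
        simp only [sum_range_two_mul]
    _ = 2 * ∑ i ∈ range N, ∑ j ∈ range N, f (i, j) ^ 2 := by rw [sum_sq_QRT_odd hN f]
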